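/- arXiv:2305.15343 — 4 statements merged into one kernel-verified Lean document; each statement's English description precedes it below -/
import Mathlib

section
/- For every j ≥ 1 and m ≥ 0, writing ℓ = Σ_{i=j+1}^{j+m} g_i (with ℓ = 0 when m = 0), the covariance of x_j and x_{j+m} equals Cov(x_j, x_{j+m}) = σ² φ^{ℓ} / (1 − φ²). In particular the covariance depends on (j, m) only through the elapsed gap time ℓ, so the process (x_j) is weakly stationary. -/
/-!
Unrolling the recursion, `x (j + m)` is `φ ^ ℓ * x j` plus a combination of
`η (j + 1), …, η (j + m)`, while `x j` depends only on `η 1, …, η j`; by independence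
`Cov(x j, x (j + m)) = φ ^ ℓ * Var(x j)`. The innovation variances are exactly those that keep
`Var(x j) = σ² / (1 - φ²)`: `φ ^ (2 g) s + (1 - φ ^ (2 g)) s = s`.
-/

open MeasureTheory ProbabilityTheory Real Finset

/-- Covariance of two real random variables: `Cov(X,Y) = E[(X - E X)(Y - E Y)]`. -/
noncomputable def cov {Ω : Type*} [MeasurableSpace Ω] (P : Measure Ω) (X Y : Ω → ℝ) : ℝ :=
  ∫ ω, (X ω - ∫ a, X a ∂P) * (Y ω - ∫ a, Y a ∂P) ∂P

section

variable {Ω : Type*}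

structure IsAutoregressive (a : ℕ → ℝ) (η x : ℕ → Ω → ℝ) : Prop where
  one : x 1 = η 1
  succ : ∀ j, 1 ≤ j → x (j + 1) = fun ω => a (j + 1) * x j ω + η (j + 1) ω

namespace IsAutoregressive

variable {a : ℕ → ℝ} {η x : ℕ → Ω → ℝ}

lemma measurable_iSup_comap (hx : IsAutoregressive a η x) {j : ℕ} (hj : 1 ≤ j) :
    Measurable[⨆ i ∈ Set.Iic j, MeasurableSpace.comap (η i) inferInstance] (x j) := by
  induction j, hj using Nat.le_induction with
  | base =>
    rw [hx.one]
    exact (comap_measurable (η 1)).mono (le_iSup₂_of_le 1 (Set.mem_Iic.mpr le_rfl) le_rfl)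
      le_rfl
  | succ j hj ih =>
    rw [hx.succ j hj]
    have hmono : (⨆ i ∈ Set.Iic j, MeasurableSpace.comap (η i) inferInstance)
        ≤ ⨆ i ∈ Set.Iic (j + 1), MeasurableSpace.comap (η i) inferInstance :=
      biSup_mono fun i hi => Set.mem_Iic.mpr (Nat.le_succ_of_le hi)
    exact ((ih.mono hmono le_rfl).const_mul _).add ((comap_measurable (η (j + 1))).mono
      (le_iSup₂_of_le (j + 1) (Set.mem_Iic.mpr le_rfl) le_rfl) le_rfl)

variable [MeasurableSpace Ω] {P : Measure Ω}

lemma indepFun (hx : IsAutoregressive a η x) (hmeas : ∀ j, Measurable (η j))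
    (hind : iIndepFun η P) {j l : ℕ} (hj : 1 ≤ j) (hjl : j < l) :
    IndepFun (x j) (η l) P := by
  have hsplit := indep_iSup_of_disjoint (fun i => (hmeas i).comap_le) hind.iIndep
    (Set.disjoint_singleton_right.mpr (Set.notMem_Iic.mpr hjl))
  rw [IndepFun_iff_Indep]
  refine indep_of_indep_of_le_right (indep_of_indep_of_le_left hsplit ?_) ?_
  · exact (hx.measurable_iSup_comap hj).comap_le
  · exact le_iSup₂_of_le l (Set.mem_singleton l) le_rfl

lemma memLp_two (hx : IsAutoregressive a η x) (hL2 : ∀ j, 1 ≤ j → MemLp (η j) 2 P)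
    {j : ℕ} (hj : 1 ≤ j) : MemLp (x j) 2 P := by
  induction j, hj using Nat.le_induction with
  | base => exact hx.one ▸ hL2 1 le_rfl
  | succ j hj ih => exact hx.succ j hj ▸ (ih.const_mul _).add (hL2 (j + 1) (by omega))

lemma variance_succ (hx : IsAutoregressive a η x)
    (hmeas : ∀ j, Measurable (η j)) (hind : iIndepFun η P) (hL2 : ∀ j, 1 ≤ j → MemLp (η j) 2 P)
    {j : ℕ} (hj : 1 ≤ j) :
    Var[x (j + 1); P] = a (j + 1) ^ 2 * Var[x j; P] + Var[η (j + 1); P] := by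
  rw [hx.succ j hj]
  change Var[a (j + 1) • x j + η (j + 1); P] = _
  rw [((hx.indepFun hmeas hind hj (by omega)).comp (measurable_const_mul (a (j + 1)))
      measurable_id).variance_add ((hx.memLp_two hL2 hj).const_smul _) (hL2 _ (by omega)),
    variance_smul]

lemma variance_eq_of_variance_innovation (hx : IsAutoregressive a η x)
    (hmeas : ∀ j, Measurable (η j)) (hind : iIndepFun η P) (hL2 : ∀ j, 1 ≤ j → MemLp (η j) 2 P)
    {s : ℝ} (hvar1 : Var[η 1; P] = s)
    (hvar : ∀ j, 1 ≤ j → Var[η (j + 1); P] = (1 - a (j + 1) ^ 2) * s) {j : ℕ} (hj : 1 ≤ j) :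
    Var[x j; P] = s := by
  induction j, hj using Nat.le_induction with
  | base => rw [hx.one, hvar1]
  | succ j hj ih =>
    rw [hx.variance_succ hmeas hind hL2 hj, ih, hvar j hj]
    ring

variable [IsFiniteMeasure P]

lemma covariance_add_eq_prod_mul_variance (hx : IsAutoregressive a η x)
    (hmeas : ∀ j, Measurable (η j)) (hind : iIndepFun η P) (hL2 : ∀ j, 1 ≤ j → MemLp (η j) 2 P)
    {j : ℕ} (hj : 1 ≤ j) (m : ℕ) :
    cov[x j, x (j + m); P] = (∏ i ∈ Ioc j (j + m), a i) * Var[x j; P] := by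
  induction m with
  | zero => simp [covariance_self (hx.memLp_two hL2 hj).aemeasurable]
  | succ m ih =>
    have hjm : 1 ≤ j + m := by omega
    rw [← add_assoc, hx.succ (j + m) hjm, prod_Ioc_succ_top (by omega)]
    change cov[x j, (fun ω => a (j + m + 1) * x (j + m) ω) + η (j + m + 1); P] = _
    rw [covariance_add_right (hx.memLp_two hL2 hj) ((hx.memLp_two hL2 hjm).const_mul _)
        (hL2 _ (by omega)), covariance_const_mul_right, ih,
      (hx.indepFun hmeas hind hj (by omega)).covariance_eq_zero (hx.memLp_two hL2 hj)
        (hL2 _ (by omega))]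
    ring

end IsAutoregressive

variable [MeasurableSpace Ω] {P : Measure Ω}

lemma cov_eq_covariance (X Y : Ω → ℝ) : cov P X Y = cov[X, Y; P] := rfl

lemma memLp_two_of_map_eq_gaussianReal {X : Ω → ℝ} {m : ℝ} {v : NNReal} (hX : Measurable X)
    (h : P.map X = gaussianReal m v) : MemLp X 2 P :=
  (memLp_map_measure_iff aestronglyMeasurable_id hX.aemeasurable).mp
    (h ▸ memLp_id_gaussianReal 2)

lemma variance_of_map_eq_gaussianReal {X : Ω → ℝ} {m : ℝ} {v : NNReal} (hX : Measurable X)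
    (h : P.map X = gaussianReal m v) : Var[X; P] = v :=
  (HasLaw.variance_eq ⟨hX.aemeasurable, h⟩).trans variance_id_gaussianReal

end

theorem irsv_autocovariance_general
    {Ω : Type*} [MeasurableSpace Ω] (P : Measure Ω) [IsProbabilityMeasure P]
    (σ φ : ℝ) (hφ0 : 0 < φ) (hφ1 : φ < 1)
    (g : ℕ → ℝ) (hg : ∀ j, 2 ≤ j → 0 < g j)
    (η : ℕ → Ω → ℝ) (hmeas : ∀ j, Measurable (η j))
    (hindep : iIndepFun η P)
    (hlaw1 : Measure.map (η 1) P = gaussianReal 0 (σ ^ 2 / (1 - φ ^ 2)).toNNReal)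
    (hlawj : ∀ j, 2 ≤ j → Measure.map (η j) P
      = gaussianReal 0 (σ ^ 2 * (1 - φ ^ (2 * g j)) / (1 - φ ^ 2)).toNNReal)
    (x : ℕ → Ω → ℝ) (hx1 : x 1 = η 1)
    (hxrec : ∀ j, 2 ≤ j → x j = fun ω => φ ^ (g j) * x (j - 1) ω + η j ω) :
    ∀ j, 1 ≤ j → ∀ m : ℕ,
      cov P (x j) (x (j + m))
        = σ ^ 2 * φ ^ (∑ i ∈ Finset.Icc (j + 1) (j + m), g i) / (1 - φ ^ 2) := by
  have hφ2 : 0 < 1 - φ ^ 2 := by nlinarith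
  have hx : IsAutoregressive (fun i => φ ^ g i) η x :=
    ⟨hx1, fun j _ => by simpa using hxrec (j + 1) (by omega)⟩
  have hL2 : ∀ j, 1 ≤ j → MemLp (η j) 2 P := fun j hj => by
    rcases hj.eq_or_lt with rfl | hj
    · exact memLp_two_of_map_eq_gaussianReal (hmeas 1) hlaw1
    · exact memLp_two_of_map_eq_gaussianReal (hmeas j) (hlawj j hj)
  have hvar : ∀ j, 1 ≤ j → Var[x j; P] = σ ^ 2 / (1 - φ ^ 2) := fun j hj =>
    hx.variance_eq_of_variance_innovation hmeas hindep hL2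
      (by rw [variance_of_map_eq_gaussianReal (hmeas 1) hlaw1, coe_toNNReal _ (by positivity)])
      (fun j hj => by
        have hpow : φ ^ (2 * g (j + 1)) ≤ 1 :=
          rpow_le_one hφ0.le hφ1.le (by linarith [hg (j + 1) (by omega)])
        rw [variance_of_map_eq_gaussianReal (hmeas _) (hlawj _ (by omega)),
          coe_toNNReal _ (div_nonneg (by nlinarith) hφ2.le), ← rpow_mul_natCast hφ0.le,
          mul_comm (2 : ℝ)]
        push_cast
        ring) hj
  intro j hj m
  rw [cov_eq_covariance, hx.covariance_add_eq_prod_mul_variance hmeas hindep hL2 hj,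
    hvar j hj, ← rpow_sum_of_pos hφ0, ← Finset.Icc_add_one_left_eq_Ioc]
  ring

/-- in the IR-SV model, for every `j ≥ 1` and `m ≥ 0`, writing
`ℓ = ∑_{i=j+1}^{j+m} g i`, one has `Cov(x j, x (j+m)) = σ² φ^ℓ / (1 - φ²)`;
in particular the covariance depends on `(j, m)` only through `ℓ`, so the
process `x` is weakly stationary. -/
theorem irsv_autocovariance
    {Ω : Type*} [MeasurableSpace Ω] (P : Measure Ω) [IsProbabilityMeasure P]
    (μ σ φ : ℝ) (hσ : 0 < σ) (hφ0 : 0 < φ) (hφ1 : φ < 1)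
    (g : ℕ → ℝ) (hg : ∀ j, 2 ≤ j → 0 < g j)
    (η : ℕ → Ω → ℝ) (hmeas : ∀ j, Measurable (η j))
    (hindep : iIndepFun η P)
    (hlaw1 : Measure.map (η 1) P = gaussianReal 0 (σ ^ 2 / (1 - φ ^ 2)).toNNReal)
    (hlawj : ∀ j, 2 ≤ j → Measure.map (η j) P
      = gaussianReal 0 (σ ^ 2 * (1 - φ ^ (2 * g j)) / (1 - φ ^ 2)).toNNReal)
    (x : ℕ → Ω → ℝ) (hx1 : x 1 = η 1)
    (hxrec : ∀ j, 2 ≤ j → x j = fun ω => φ ^ (g j) * x (j - 1) ω + η j ω) :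
    ∀ j, 1 ≤ j → ∀ m : ℕ,
      cov P (x j) (x (j + m))
        = σ ^ 2 * φ ^ (∑ i ∈ Finset.Icc (j + 1) (j + m), g i) / (1 - φ ^ 2) :=
  irsv_autocovariance_general P σ φ hφ0 hφ1 g hg η hmeas hindep hlaw1 hlawj x hx1 hxrec
end

section
/- For every j ≥ 1 and m ≥ 0, writing ℓ = Σ_{i=j+1}^{j+m} g_i, the law of h_j + h_{j+m} is the Gaussian distribution N(2μ, 2σ²(1 + φ^{ℓ})/(1 − φ²)); that is, the pushforward of the underlying probability measure under h_j + h_{j+m} equals the real Gaussian measure with mean 2μ and variance 2σ²(1 + φ^{ℓ})/(1 − φ²). -/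
/-! The centred log-volatility is the AR(1) chain `x (n + 1) = c (n + 1) * x n + η (n + 1)` with
`c n = φ ^ g n`, and the noise variances `(1 - c n ^ 2) * s`, `s = σ² / (1 - φ²)`, are exactly those
that keep every `x n` distributed as `N(0, s)`. Since `η (n + 1)` is independent of
`x 1, …, x n` and independent Gaussians add to a Gaussian, induction on `m` shows that
`a * x j + b * x (j + m)` is `N(0, (a² + b² + 2ab ∏ c i) s)`. Take `a = b = 1` and
`∏ c i = φ ^ ℓ`. -/

open MeasureTheory ProbabilityTheory Real Finset

lemma map_const_mul_eq_gaussianReal {Ω : Type*} [MeasurableSpace Ω] {P : Measure Ω}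
    {X : Ω → ℝ} (hX : Measurable X) {v : ℝ} (hlaw : P.map X = gaussianReal 0 v.toNNReal)
    (a : ℝ) : P.map (fun ω => a * X ω) = gaussianReal 0 (a ^ 2 * v).toNNReal := by
  rw [← Function.comp_def (a * ·), ← Measure.map_map (measurable_const_mul a) hX, hlaw,
    gaussianReal_map_const_mul, mul_zero, Real.toNNReal_mul (sq_nonneg a)]
  congr
  exact (max_eq_left (sq_nonneg a)).symm

lemma map_add_eq_gaussianReal_of_indepFun {Ω : Type*} [MeasurableSpace Ω] {P : Measure Ω}
    {X Y : Ω → ℝ} (hXY : IndepFun X Y P) {v w : ℝ} (hv : 0 ≤ v) (hw : 0 ≤ w)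
    (hX : P.map X = gaussianReal 0 v.toNNReal) (hY : P.map Y = gaussianReal 0 w.toNNReal) :
    P.map (fun ω => X ω + Y ω) = gaussianReal 0 (v + w).toNNReal := by
  rw [Real.toNNReal_add hv hw, ← zero_add (0 : ℝ)]
  exact gaussianReal_add_gaussianReal_of_indepFun hXY hX hY

lemma sq_add_sq_add_two_mul_mul_nonneg {t : ℝ} (ht : |t| ≤ 1) (a b : ℝ) :
    0 ≤ a ^ 2 + b ^ 2 + 2 * a * b * t := by
  rw [abs_le] at ht
  nlinarith [mul_nonneg (sub_nonneg.mpr ht.2) (sq_nonneg (a - b)),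
    mul_nonneg (neg_le_iff_add_nonneg.mp ht.1) (sq_nonneg (a + b))]

section PastSigma

variable {Ω β : Type*} [mβ : MeasurableSpace β]

abbrev pastSigma (η : ℕ → Ω → β) (n : ℕ) : MeasurableSpace Ω :=
  ⨆ i ≤ n, mβ.comap (η i)

lemma measurable_pastSigma {η : ℕ → Ω → β} {i n : ℕ} (hin : i ≤ n) :
    Measurable[pastSigma η n] (η i) :=
  Measurable.of_comap_le (le_iSup₂ (f := fun i (_ : i ≤ n) => mβ.comap (η i)) i hin)

lemma pastSigma_mono (η : ℕ → Ω → β) {n N : ℕ} (hnN : n ≤ N) : pastSigma η n ≤ pastSigma η N :=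
  iSup₂_le fun i hi => le_iSup₂ (f := fun i (_ : i ≤ N) => mβ.comap (η i)) i (hi.trans hnN)

lemma indepFun_of_measurable_pastSigma [MeasurableSpace Ω] {P : Measure Ω} {η : ℕ → Ω → β}
    (hmeas : ∀ i, Measurable (η i)) (hindep : iIndepFun η P) {n k : ℕ} (hnk : n < k)
    {γ : Type*} [MeasurableSpace γ] {Y : Ω → γ} (hY : Measurable[pastSigma η n] Y) :
    IndepFun Y (η k) P := by
  have hpast := indep_iSup_of_disjoint (fun i => (hmeas i).comap_le)
    ((iIndepFun_iff_iIndep _ _ _).mp hindep) (S := Set.Iic n) (T := {k})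
    (Set.disjoint_singleton_right.mpr (not_le.mpr hnk))
  rw [IndepFun_iff_Indep]
  exact indep_of_indep_of_le_right (indep_of_indep_of_le_left hpast hY.comap_le)
    (le_iSup₂ (f := fun i (_ : i ∈ ({k} : Set ℕ)) => mβ.comap (η i)) k rfl)

end PastSigma

section AR

variable {Ω : Type*} {η x : ℕ → Ω → ℝ} {c : ℕ → ℝ} (hx1 : x 1 = η 1)
  (hxsucc : ∀ n, 1 ≤ n → x (n + 1) = fun ω => c (n + 1) * x n ω + η (n + 1) ω)

include hx1 hxsucc in
lemma measurable_pastSigma_ar {n : ℕ} (hn : 1 ≤ n) : Measurable[pastSigma η n] (x n) := by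
  induction n, hn using Nat.le_induction with
  | base => rw [hx1]; exact measurable_pastSigma le_rfl
  | succ n hn ih =>
    rw [hxsucc n hn]
    exact ((ih.mono (pastSigma_mono η n.le_succ) le_rfl).const_mul _).add
      (measurable_pastSigma le_rfl)

variable [MeasurableSpace Ω] {P : Measure Ω} (hmeas : ∀ i, Measurable (η i))

include hx1 hxsucc hmeas in
lemma measurable_ar {n : ℕ} (hn : 1 ≤ n) : Measurable (x n) :=
  (measurable_pastSigma_ar hx1 hxsucc hn).mono (iSup₂_le fun i _ => (hmeas i).comap_le) le_rfl

variable (hindep : iIndepFun η P) {s : ℝ} (hs : 0 ≤ s) (hc : ∀ n, 2 ≤ n → |c n| ≤ 1)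
  (hlaw : ∀ n, 2 ≤ n → P.map (η n) = gaussianReal 0 ((1 - c n ^ 2) * s).toNNReal)
include hmeas hindep hs hc hlaw

lemma map_add_mul_noise_eq_gaussianReal {n : ℕ} (hn : 1 ≤ n) {Y : Ω → ℝ}
    (hY : Measurable[pastSigma η n] Y) {v : ℝ} (hv : 0 ≤ v)
    (hYlaw : P.map Y = gaussianReal 0 v.toNNReal) (b : ℝ) :
    P.map (fun ω => Y ω + b * η (n + 1) ω)
      = gaussianReal 0 (v + b ^ 2 * ((1 - c (n + 1) ^ 2) * s)).toNNReal := by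
  have hc2 : c (n + 1) ^ 2 ≤ 1 := (sq_le_one_iff_abs_le_one _).mpr (hc (n + 1) (by omega))
  refine map_add_eq_gaussianReal_of_indepFun ?_ hv
    (mul_nonneg (sq_nonneg b) (mul_nonneg (sub_nonneg.mpr hc2) hs)) hYlaw
    (map_const_mul_eq_gaussianReal (hmeas _) (hlaw _ (by omega)) b)
  exact (indepFun_of_measurable_pastSigma hmeas hindep n.lt_succ_self hY).comp measurable_id
    (measurable_const_mul b)

variable (hlaw1 : P.map (η 1) = gaussianReal 0 s.toNNReal)
include hx1 hxsucc hlaw1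

lemma map_ar_eq_gaussianReal {n : ℕ} (hn : 1 ≤ n) : P.map (x n) = gaussianReal 0 s.toNNReal := by
  induction n, hn using Nat.le_induction with
  | base => rw [hx1, hlaw1]
  | succ n hn ih =>
    have hstep := map_add_mul_noise_eq_gaussianReal hmeas hindep hs hc hlaw hn
      ((measurable_pastSigma_ar hx1 hxsucc hn).const_mul (c (n + 1)))
      (mul_nonneg (sq_nonneg _) hs)
      (map_const_mul_eq_gaussianReal (measurable_ar hx1 hxsucc hmeas hn) ih _) 1
    rw [hxsucc n hn]
    simpa [← add_mul] using hstep

lemma map_mul_add_mul_ar_eq_gaussianReal {j : ℕ} (hj : 1 ≤ j) (m : ℕ) (a b : ℝ) :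
    P.map (fun ω => a * x j ω + b * x (j + m) ω)
      = gaussianReal 0
          ((a ^ 2 + b ^ 2 + 2 * a * b * ∏ i ∈ Icc (j + 1) (j + m), c i) * s).toNNReal := by
  induction m generalizing a b with
  | zero =>
    have hcollapse : (fun ω => a * x j ω + b * x (j + 0) ω) = fun ω => (a + b) * x j ω := by
      funext ω; ring_nf
    rw [hcollapse, map_const_mul_eq_gaussianReal (measurable_ar hx1 hxsucc hmeas hj)
      (map_ar_eq_gaussianReal hx1 hxsucc hmeas hindep hs hc hlaw hlaw1 hj),
      Icc_eq_empty (by omega), prod_empty]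
    congr 2
    ring
  | succ m ih =>
    have hprod_le : |∏ i ∈ Icc (j + 1) (j + m), c i| ≤ 1 := by
      rw [abs_prod]
      exact prod_le_one (fun _ _ => abs_nonneg _) fun i hi => hc i (by simp at hi; omega)
    have hsplit : (fun ω => a * x j ω + b * x (j + (m + 1)) ω)
        = fun ω => (a * x j ω + b * c (j + m + 1) * x (j + m) ω) + b * η (j + m + 1) ω := by
      rw [← add_assoc, hxsucc (j + m) (by omega)]
      funext ω; beta_reduce; ring
    have hY : Measurable[pastSigma η (j + m)]
        (fun ω => a * x j ω + b * c (j + m + 1) * x (j + m) ω) :=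
      (((measurable_pastSigma_ar hx1 hxsucc hj).mono (pastSigma_mono η (by omega)) le_rfl).const_mul
        a).add ((measurable_pastSigma_ar hx1 hxsucc (by omega)).const_mul _)
    rw [hsplit, map_add_mul_noise_eq_gaussianReal hmeas hindep hs hc hlaw (by omega) hY
      (mul_nonneg (sq_add_sq_add_two_mul_mul_nonneg hprod_le _ _) hs) (ih _ _),
      ← add_assoc, prod_Icc_succ_top (by omega)]
    congr 2
    ring

end AR

theorem irsv_sum_logvol_gaussian_law_general
    {Ω : Type*} [MeasurableSpace Ω] (P : Measure Ω)
    (μ σ φ : ℝ) (hφ0 : 0 < φ) (hφ1 : φ < 1)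
    (g : ℕ → ℝ) (hg : ∀ j, 2 ≤ j → 0 < g j)
    (η : ℕ → Ω → ℝ) (hmeas : ∀ j, Measurable (η j))
    (hindep : iIndepFun η P)
    (hlaw1 : Measure.map (η 1) P = gaussianReal 0 (σ ^ 2 / (1 - φ ^ 2)).toNNReal)
    (hlawj : ∀ j, 2 ≤ j → Measure.map (η j) P
      = gaussianReal 0 (σ ^ 2 * (1 - φ ^ (2 * g j)) / (1 - φ ^ 2)).toNNReal)
    (x : ℕ → Ω → ℝ) (hx1 : x 1 = η 1)
    (hxrec : ∀ j, 2 ≤ j → x j = fun ω => φ ^ (g j) * x (j - 1) ω + η j ω)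
    (h : ℕ → Ω → ℝ) (hh : ∀ j, h j = fun ω => μ + x j ω) :
    ∀ j, 1 ≤ j → ∀ m : ℕ,
      Measure.map (fun ω => h j ω + h (j + m) ω) P
        = gaussianReal (2 * μ)
            (2 * σ ^ 2 * (1 + φ ^ (∑ i ∈ Finset.Icc (j + 1) (j + m), g i))
              / (1 - φ ^ 2)).toNNReal := by
  intro j hj m
  have hφ2 : 0 < 1 - φ ^ 2 := by nlinarith
  have hxsucc (n : ℕ) (hn : 1 ≤ n) : x (n + 1) = fun ω => φ ^ g (n + 1) * x n ω + η (n + 1) ω :=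
    hxrec (n + 1) (by omega)
  have hc (n : ℕ) (hn : 2 ≤ n) : |φ ^ g n| ≤ 1 := by
    rw [abs_of_pos (rpow_pos_of_pos hφ0 _)]
    exact rpow_le_one hφ0.le hφ1.le (hg n hn).le
  have hlaw (n : ℕ) (hn : 2 ≤ n) :
      P.map (η n) = gaussianReal 0 ((1 - (φ ^ g n) ^ 2) * (σ ^ 2 / (1 - φ ^ 2))).toNNReal := by
    rw [hlawj n hn, ← rpow_mul_natCast hφ0.le, Nat.cast_ofNat, mul_comm (g n)]
    congr 2
    ring
  have hxsum := map_mul_add_mul_ar_eq_gaussianReal hx1 hxsucc hmeas hindep (by positivity) hc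
    hlaw hlaw1 hj m 1 1
  simp only [one_mul, one_pow, mul_one] at hxsum
  have hshift : (fun ω => h j ω + h (j + m) ω) = (· + 2 * μ) ∘ fun ω => x j ω + x (j + m) ω := by
    funext ω
    simp only [hh, Function.comp_apply]
    ring
  rw [hshift, ← Measure.map_map (f := fun ω => x j ω + x (j + m) ω) (measurable_add_const _)
      ((measurable_ar (c := (φ ^ g ·)) hx1 hxsucc hmeas hj).add
        (measurable_ar (c := (φ ^ g ·)) hx1 hxsucc hmeas (by omega))),
    hxsum, gaussianReal_map_add_const, zero_add, ← rpow_sum_of_pos hφ0]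
  congr 2
  field_simp
  ring

/-- in the IR-SV model, for every `j ≥ 1` and `m ≥ 0`, writing
`ℓ = ∑_{i=j+1}^{j+m} g i`, the law of `h j + h (j+m)` is the Gaussian distribution
`N(2μ, 2σ²(1 + φ^ℓ)/(1 - φ²))`. -/
theorem irsv_sum_logvol_gaussian_law
    {Ω : Type*} [MeasurableSpace Ω] (P : Measure Ω) [IsProbabilityMeasure P]
    (μ σ φ : ℝ) (hσ : 0 < σ) (hφ0 : 0 < φ) (hφ1 : φ < 1)
    (g : ℕ → ℝ) (hg : ∀ j, 2 ≤ j → 0 < g j)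
    (η : ℕ → Ω → ℝ) (hmeas : ∀ j, Measurable (η j))
    (hindep : iIndepFun η P)
    (hlaw1 : Measure.map (η 1) P = gaussianReal 0 (σ ^ 2 / (1 - φ ^ 2)).toNNReal)
    (hlawj : ∀ j, 2 ≤ j → Measure.map (η j) P
      = gaussianReal 0 (σ ^ 2 * (1 - φ ^ (2 * g j)) / (1 - φ ^ 2)).toNNReal)
    (x : ℕ → Ω → ℝ) (hx1 : x 1 = η 1)
    (hxrec : ∀ j, 2 ≤ j → x j = fun ω => φ ^ (g j) * x (j - 1) ω + η j ω)
    (h : ℕ → Ω → ℝ) (hh : ∀ j, h j = fun ω => μ + x j ω) :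
    ∀ j, 1 ≤ j → ∀ m : ℕ,
      Measure.map (fun ω => h j ω + h (j + m) ω) P
        = gaussianReal (2 * μ)
            (2 * σ ^ 2 * (1 + φ ^ (∑ i ∈ Finset.Icc (j + 1) (j + m), g i))
              / (1 - φ ^ 2)).toNNReal :=
  irsv_sum_logvol_gaussian_law_general P μ σ φ hφ0 hφ1 g hg η hmeas hindep hlaw1 hlawj x hx1 hxrec h
    hh
end

section
/- For every j ≥ 1 and m ≥ 1, writing ℓ = Σ_{i=j+1}^{j+m} g_i, the autocovariance of the squared returns satisfies Cov(r_j², r_{j+m}²) = exp(2μ + σ²/(1−φ²)) · (exp(σ² φ^{ℓ}/(1−φ²)) − 1). In particular this covariance depends on (j, m) only through the elapsed gap time ℓ, so the squared-return process (r_j²) is weakly stationary. -/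
/-!
The log-volatility is a Gaussian AR(1) chain whose coefficient `φ ^ g j` depends on the gap, and
its innovation variances `V (1 - φ ^ (2 g j))`, `V = σ² / (1 - φ²)`, are chosen so that every
`x j` is `N(0, V)`. Iterating the recursion, `x (j + m) = φ ^ ℓ x j + ξ` with `ξ` independent of
`x j` and `N(0, V (1 - φ ^ (2ℓ)))`, so `x j + x (j + m)` is `N(0, 2V (1 + φ ^ ℓ))`; this is
computed with moment generating functions. As the `ε` are independent of the `x` with `E ε² = 1`,
`E r_j² = e^μ E e^(x j) = e^(μ + V/2)` and
`E r_j² r_(j+m)² = e^(2μ) E e^(x j + x (j + m)) = e^(2μ + V (1 + φ ^ ℓ))`.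
-/

open MeasureTheory ProbabilityTheory Real Finset

open scoped NNReal

section General

variable {Ω : Type*} [MeasurableSpace Ω] {P : Measure Ω}

lemma ProbabilityTheory.Indep.indepFun_of_measurable {m₁ m₂ : MeasurableSpace Ω} (h : Indep m₁ m₂ P)
    {β γ : Type*} [MeasurableSpace β] [MeasurableSpace γ] {X : Ω → β} {Y : Ω → γ}
    (hX : Measurable[m₁] X) (hY : Measurable[m₂] Y) : IndepFun X Y P :=
  (IndepFun_iff_Indep X Y P).2 (indep_of_indep_of_le h hX.comap_le hY.comap_le)

lemma cov_eq_sub_of_integrable [IsProbabilityMeasure P] {X Y : Ω → ℝ} (hX : Integrable X P)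
    (hY : Integrable Y P) (hXY : Integrable (fun ω => X ω * Y ω) P) :
    cov P X Y = ∫ ω, X ω * Y ω ∂P - (∫ ω, X ω ∂P) * ∫ ω, Y ω ∂P := by
  simp_rw [cov, sub_mul, mul_sub]
  have hXY' : Integrable (fun ω => X ω * Y ω - X ω * ∫ a, Y a ∂P) P := hXY.sub (hX.mul_const _)
  have hY' : Integrable (fun ω => (∫ a, X a ∂P) * Y ω - (∫ a, X a ∂P) * ∫ a, Y a ∂P) P :=
    (hY.const_mul _).sub (integrable_const _)
  rw [integral_sub hXY' hY', integral_sub hXY (hX.mul_const _),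
    integral_sub (hY.const_mul _) (integrable_const _), integral_mul_const, integral_const_mul,
    integral_const, probReal_univ, one_smul]
  ring

lemma integral_sq_of_map_eq_gaussianReal {X : Ω → ℝ} (hXm : AEMeasurable X P) {v : ℝ≥0}
    (hX : P.map X = gaussianReal 0 v) :
    Integrable (fun ω => X ω ^ 2) P ∧ ∫ ω, X ω ^ 2 ∂P = v := by
  have hL : HasLaw X (gaussianReal 0 v) P := ⟨hXm, hX⟩
  have hmem : MemLp X 2 P := by
    have h := memLp_id_gaussianReal (μ := 0) (v := v) 2
    rw [← hX] at h
    exact (memLp_map_measure_iff aestronglyMeasurable_id hXm).1 h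
  refine ⟨hmem.integrable_sq, ?_⟩
  have hmean : ∫ ω, X ω ∂P = 0 := by rw [hL.integral_eq, integral_id_gaussianReal]
  have hvar := hL.variance_eq
  rw [variance_eq_integral hXm, hmean, variance_id_gaussianReal] at hvar
  simpa using hvar

lemma ProbabilityTheory.iIndepFun.indep_iSup_comap {ι β : Type*} [mβ : MeasurableSpace β]
    {f : ι → Ω → β} (hf : ∀ i, Measurable (f i)) (h : iIndepFun f P) {S T : Set ι}
    (hST : Disjoint S T) :
    Indep (⨆ i ∈ S, mβ.comap (f i)) (⨆ i ∈ T, mβ.comap (f i)) P :=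
  indep_iSup_of_disjoint (fun i => (hf i).comap_le) ((iIndepFun_iff_iIndep _ _ _).1 h) hST

lemma ProbabilityTheory.iIndepFun.indep_iSup_comap_sum_elim {ι κ β : Type*}
    [mβ : MeasurableSpace β] {f : ι → Ω → β} {f' : κ → Ω → β} (hf : ∀ i, Measurable (f i))
    (hf' : ∀ i, Measurable (f' i)) (h : iIndepFun (Sum.elim f f') P) :
    Indep (⨆ i, mβ.comap (f i)) (⨆ i, mβ.comap (f' i)) P := by
  have h' := h.indep_iSup_comap (Sum.forall.2 ⟨hf, hf'⟩) Set.isCompl_range_inl_range_inr.disjoint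
  simpa only [iSup_range, Sum.elim_inl, Sum.elim_inr] using h'

lemma ProbabilityTheory.iIndepFun.indep_natural_comap_succ {f : ℕ → Ω → ℝ}
    (hf : ∀ i, Measurable (f i)) (h : iIndepFun f P) (n : ℕ) :
    Indep (Filtration.natural f (fun i => (hf i).stronglyMeasurable) n)
      (MeasurableSpace.comap (f (n + 1)) inferInstance) P :=
  indep_of_indep_of_le_right
    (h.indep_iSup_comap hf (S := Set.Iic n) (T := {n + 1}) (by simp))
    (le_iSup₂ (f := fun i (_ : i ∈ ({n + 1} : Set ℕ)) => MeasurableSpace.comap (f i) _) (n + 1) rfl)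

lemma mgf_eq_of_map_eq_gaussianReal {X : Ω → ℝ} {w : ℝ} (hw : 0 ≤ w)
    (hX : P.map X = gaussianReal 0 w.toNNReal) (t : ℝ) : mgf X P t = exp (w * t ^ 2 / 2) := by
  rw [mgf_gaussianReal hX, Real.coe_toNNReal _ hw, zero_mul, zero_add]

end General

section GaussianAR

variable {Ω : Type*} [mΩ : MeasurableSpace Ω]

structure IsStationaryGaussianAR (P : Measure Ω) (𝓕 : Filtration ℕ mΩ) (a : ℕ → ℝ) (V : ℝ)
    (x η : ℕ → Ω → ℝ) : Prop where
  mgf_one : ∀ t, mgf (x 1) P t = exp (V * t ^ 2 / 2)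
  succ : ∀ n, 1 ≤ n → x (n + 1) = fun ω => a (n + 1) * x n ω + η (n + 1) ω
  measurable : ∀ n, 1 ≤ n → Measurable[𝓕 n] (x n)
  measurable_innov : ∀ n, Measurable (η n)
  indep_innov : ∀ n, Indep (𝓕 n) (MeasurableSpace.comap (η (n + 1)) inferInstance) P
  mgf_innov : ∀ n, 1 ≤ n → ∀ t, mgf (η (n + 1)) P t = exp (V * (1 - a (n + 1) ^ 2) * t ^ 2 / 2)

namespace IsStationaryGaussianAR

variable {P : Measure Ω} {𝓕 : Filtration ℕ mΩ} {a : ℕ → ℝ} {V : ℝ} {x η : ℕ → Ω → ℝ}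

lemma mgf_add_mul (hx : IsStationaryGaussianAR P 𝓕 a V x η) {n : ℕ} (hn : 1 ≤ n) {Y : Ω → ℝ}
    (hY : Measurable[𝓕 n] Y) (t : ℝ) (m : ℕ) (c : ℝ) :
    mgf (fun ω => Y ω + c * x (n + m) ω) P t
      = mgf (fun ω => Y ω + c * (∏ i ∈ Icc (n + 1) (n + m), a i) * x n ω) P t
        * exp (V * (1 - (∏ i ∈ Icc (n + 1) (n + m), a i) ^ 2) * (c * t) ^ 2 / 2) := by
  induction m generalizing c with
  | zero => simp
  | succ m ih =>
    have hsplit : (fun ω => Y ω + c * x (n + (m + 1)) ω)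
        = (fun ω => Y ω + c * a (n + m + 1) * x (n + m) ω) + fun ω => c * η (n + m + 1) ω := by
      rw [← add_assoc, hx.succ _ (by omega)]
      funext ω
      simp only [Pi.add_apply]
      ring
    have hYx : Measurable[𝓕 (n + m)] fun ω => Y ω + c * a (n + m + 1) * x (n + m) ω :=
      (hY.mono (𝓕.mono (by omega)) le_rfl).add ((hx.measurable _ (by omega)).const_mul _)
    have hind : IndepFun (fun ω => Y ω + c * a (n + m + 1) * x (n + m) ω)
        (fun ω => c * η (n + m + 1) ω) P :=
      (hx.indep_innov (n + m)).indepFun_of_measurable hYx ((comap_measurable _).const_mul c)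
    rw [hsplit, hind.mgf_add' (hYx.mono (𝓕.le _) le_rfl).aestronglyMeasurable
      ((hx.measurable_innov _).const_mul c).aestronglyMeasurable, ih, mgf_const_mul,
      hx.mgf_innov _ (by omega), ← add_assoc, prod_Icc_succ_top (by omega), mul_assoc, ← exp_add]
    congr 2
    · funext ω
      ring
    · ring

lemma mgf_eq (hx : IsStationaryGaussianAR P 𝓕 a V x η) {n : ℕ} (hn : 1 ≤ n) (t : ℝ) :
    mgf (x n) P t = exp (V * t ^ 2 / 2) := by
  obtain ⟨m, rfl⟩ := Nat.exists_eq_add_of_le hn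
  have h := hx.mgf_add_mul le_rfl (Y := 0) measurable_const t m 1
  simp only [Pi.zero_apply, zero_add, one_mul] at h
  rw [h, mgf_const_mul, hx.mgf_one, ← exp_add]
  ring_nf

lemma mgf_add (hx : IsStationaryGaussianAR P 𝓕 a V x η) {n : ℕ} (hn : 1 ≤ n) (m : ℕ) (t : ℝ) :
    mgf (fun ω => x n ω + x (n + m) ω) P t
      = exp (V * (1 + ∏ i ∈ Icc (n + 1) (n + m), a i) * t ^ 2) := by
  have h := hx.mgf_add_mul hn (hx.measurable n hn) t m 1
  simp only [one_mul] at h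
  have hlin : (fun ω => x n ω + (∏ i ∈ Icc (n + 1) (n + m), a i) * x n ω)
      = fun ω => (1 + ∏ i ∈ Icc (n + 1) (n + m), a i) * x n ω := by
    funext ω
    ring
  rw [h, hlin, mgf_const_mul, hx.mgf_eq hn, ← exp_add]
  ring_nf

end IsStationaryGaussianAR

end GaussianAR

section StochasticVolatility

variable {Ω : Type*} {m₁ m₂ : MeasurableSpace Ω} [mΩ : MeasurableSpace Ω] {P : Measure Ω}
  [IsProbabilityMeasure P]

lemma integral_sq_exp_half_mul (hI : Indep m₁ m₂ P) {X Z : Ω → ℝ} (hX : Measurable[m₁] X)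
    (hZ : Measurable[m₂] Z) {s : ℝ} (hmgf : mgf X P 1 = exp s)
    (hZ2 : Integrable (fun ω => Z ω ^ 2) P) (μ : ℝ) :
    Integrable (fun ω => (exp ((μ + X ω) / 2) * Z ω) ^ 2) P
      ∧ ∫ ω, (exp ((μ + X ω) / 2) * Z ω) ^ 2 ∂P = exp (μ + s) * ∫ ω, Z ω ^ 2 ∂P := by
  have hexp : Integrable (fun ω => exp (X ω)) P := by
    have h := mgf_pos_iff.1 (hmgf ▸ exp_pos s)
    simpa only [one_mul] using h
  have hexp_int : ∫ ω, exp (X ω) ∂P = exp s := by simpa [mgf] using hmgf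
  have hind : IndepFun (fun ω => exp (X ω)) (fun ω => Z ω ^ 2) P :=
    hI.indepFun_of_measurable hX.exp (hZ.pow_const 2)
  have hsq : (fun ω => (exp ((μ + X ω) / 2) * Z ω) ^ 2)
      = fun ω => exp μ * (exp (X ω) * Z ω ^ 2) := by
    funext ω
    rw [mul_pow, sq (exp _), ← exp_add, add_halves, exp_add, mul_assoc]
  rw [hsq, integral_const_mul, hind.integral_fun_mul_eq_mul_integral hexp.aestronglyMeasurable
    hZ2.aestronglyMeasurable, hexp_int, exp_add, mul_assoc]
  exact ⟨(hind.integrable_mul hexp hZ2).const_mul _, rfl⟩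

lemma integral_sq_exp_half_mul_sq_exp_half_mul (hI : Indep m₁ m₂ P) {X₁ X₂ Z₁ Z₂ : Ω → ℝ}
    (hX₁ : Measurable[m₁] X₁) (hX₂ : Measurable[m₁] X₂) (hZ₁ : Measurable[m₂] Z₁)
    (hZ₂ : Measurable[m₂] Z₂) (hZ : IndepFun Z₁ Z₂ P) {s : ℝ}
    (hmgf : mgf (fun ω => X₁ ω + X₂ ω) P 1 = exp s) (hZ₁2 : Integrable (fun ω => Z₁ ω ^ 2) P)
    (hZ₂2 : Integrable (fun ω => Z₂ ω ^ 2) P) (μ : ℝ) :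
    Integrable (fun ω => (exp ((μ + X₁ ω) / 2) * Z₁ ω) ^ 2 * (exp ((μ + X₂ ω) / 2) * Z₂ ω) ^ 2) P
      ∧ ∫ ω, (exp ((μ + X₁ ω) / 2) * Z₁ ω) ^ 2 * (exp ((μ + X₂ ω) / 2) * Z₂ ω) ^ 2 ∂P
        = exp (2 * μ + s) * ((∫ ω, Z₁ ω ^ 2 ∂P) * ∫ ω, Z₂ ω ^ 2 ∂P) := by
  have hind : IndepFun (fun ω => Z₁ ω ^ 2) (fun ω => Z₂ ω ^ 2) P :=
    hZ.comp (measurable_id.pow_const 2) (measurable_id.pow_const 2)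
  have hprod : (fun ω => (exp ((μ + X₁ ω) / 2) * Z₁ ω) ^ 2 * (exp ((μ + X₂ ω) / 2) * Z₂ ω) ^ 2)
      = fun ω => (exp ((2 * μ + (X₁ ω + X₂ ω)) / 2) * (Z₁ ω * Z₂ ω)) ^ 2 := by
    funext ω
    rw [show (2 * μ + (X₁ ω + X₂ ω)) / 2 = (μ + X₁ ω) / 2 + (μ + X₂ ω) / 2 by ring, exp_add]
    ring
  have hZ12 : (fun ω => (Z₁ ω * Z₂ ω) ^ 2) = fun ω => Z₁ ω ^ 2 * Z₂ ω ^ 2 := by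
    funext ω
    ring
  obtain ⟨hint, heq⟩ := integral_sq_exp_half_mul hI (X := fun ω => X₁ ω + X₂ ω)
    (Z := fun ω => Z₁ ω * Z₂ ω) (hX₁.add hX₂) (hZ₁.mul hZ₂) hmgf
    (hZ12 ▸ hind.integrable_mul hZ₁2 hZ₂2) (2 * μ)
  rw [hprod, heq, hZ12, hind.integral_fun_mul_eq_mul_integral hZ₁2.aestronglyMeasurable
    hZ₂2.aestronglyMeasurable]
  exact ⟨hint, rfl⟩

end StochasticVolatility

lemma isStationaryGaussianAR_logVol {Ω : Type*} [MeasurableSpace Ω] {P : Measure Ω} {σ φ : ℝ}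
    (hφ0 : 0 < φ) (hφ1 : φ < 1) {g : ℕ → ℝ} (hg : ∀ j, 2 ≤ j → 0 < g j) {η x : ℕ → Ω → ℝ}
    (hmeasη : ∀ j, Measurable (η j)) (hindep : iIndepFun η P)
    (hlaw1 : Measure.map (η 1) P = gaussianReal 0 (σ ^ 2 / (1 - φ ^ 2)).toNNReal)
    (hlawj : ∀ j, 2 ≤ j → Measure.map (η j) P
      = gaussianReal 0 (σ ^ 2 * (1 - φ ^ (2 * g j)) / (1 - φ ^ 2)).toNNReal)
    (hx1 : x 1 = η 1) (hxrec : ∀ j, 2 ≤ j → x j = fun ω => φ ^ (g j) * x (j - 1) ω + η j ω) :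
    IsStationaryGaussianAR P (Filtration.natural η fun i => (hmeasη i).stronglyMeasurable)
      (fun j => φ ^ g j) (σ ^ 2 / (1 - φ ^ 2)) x η := by
  have hφ2 : 0 < 1 - φ ^ 2 := by nlinarith
  have hsucc : ∀ n, 1 ≤ n → x (n + 1) = fun ω => φ ^ g (n + 1) * x n ω + η (n + 1) ω :=
    fun n hn => hxrec (n + 1) (by omega)
  have hadapt : ∀ k, Measurable[Filtration.natural η (fun i => (hmeasη i).stronglyMeasurable) k]
      (η k) := fun k =>
    (Filtration.stronglyAdapted_natural (β := fun _ => ℝ) (fun i => (hmeasη i).stronglyMeasurable)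
      k).measurable
  refine ⟨fun t => ?_, hsucc, fun n hn => ?_, hmeasη,
    hindep.indep_natural_comap_succ hmeasη, fun n hn t => ?_⟩
  · rw [hx1, mgf_eq_of_map_eq_gaussianReal (by positivity) hlaw1]
  · induction n, hn using Nat.le_induction with
    | base => exact hx1 ▸ hadapt 1
    | succ n hn ih =>
      rw [hsucc n hn]
      exact ((ih.mono (Filtration.mono _ n.le_succ) le_rfl).const_mul _).add (hadapt _)
  · have hpow : φ ^ (2 * g (n + 1)) = (φ ^ g (n + 1)) ^ 2 := by
      rw [mul_comm, rpow_mul hφ0.le, rpow_two]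
    have hle : φ ^ (2 * g (n + 1)) ≤ 1 :=
      rpow_le_one hφ0.le hφ1.le (by linarith [hg (n + 1) (by omega)])
    rw [mgf_eq_of_map_eq_gaussianReal (div_nonneg (mul_nonneg (sq_nonneg σ) (by linarith)) hφ2.le)
      (hlawj (n + 1) (by omega)), hpow]
    ring_nf

theorem irsv_squared_return_autocovariance_general
    {Ω : Type*} [MeasurableSpace Ω] (P : Measure Ω) [IsProbabilityMeasure P]
    (μ σ φ : ℝ) (hφ0 : 0 < φ) (hφ1 : φ < 1)
    (g : ℕ → ℝ) (hg : ∀ j, 2 ≤ j → 0 < g j)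
    (η : ℕ → Ω → ℝ) (hmeasη : ∀ j, Measurable (η j))
    (ε : ℕ → Ω → ℝ) (hmeasε : ∀ j, Measurable (ε j))
    (hindep : iIndepFun (Sum.elim η ε) P)
    (hlaw1 : Measure.map (η 1) P = gaussianReal 0 (σ ^ 2 / (1 - φ ^ 2)).toNNReal)
    (hlawj : ∀ j, 2 ≤ j → Measure.map (η j) P
      = gaussianReal 0 (σ ^ 2 * (1 - φ ^ (2 * g j)) / (1 - φ ^ 2)).toNNReal)
    (hlawε : ∀ j, Measure.map (ε j) P = gaussianReal 0 1)
    (x : ℕ → Ω → ℝ) (hx1 : x 1 = η 1)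
    (hxrec : ∀ j, 2 ≤ j → x j = fun ω => φ ^ (g j) * x (j - 1) ω + η j ω)
    (h : ℕ → Ω → ℝ) (hh : ∀ j, h j = fun ω => μ + x j ω)
    (r : ℕ → Ω → ℝ) (hr : ∀ j, r j = fun ω => Real.exp (h j ω / 2) * ε j ω) :
    ∀ j, 1 ≤ j → ∀ m, 1 ≤ m →
      cov P (fun ω => (r j ω) ^ 2) (fun ω => (r (j + m) ω) ^ 2)
        = Real.exp (2 * μ + σ ^ 2 / (1 - φ ^ 2))
          * (Real.exp (σ ^ 2 * φ ^ (∑ i ∈ Finset.Icc (j + 1) (j + m), g i)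
              / (1 - φ ^ 2)) - 1) := by
  intro j hj m hm
  have hAR := isStationaryGaussianAR_logVol hφ0 hφ1 hg hmeasη
    (hindep.precomp (g := Sum.inl) Sum.inl_injective) hlaw1 hlawj hx1 hxrec
  have hI := hindep.indep_iSup_comap_sum_elim hmeasη hmeasε
  have hx : ∀ k, 1 ≤ k → Measurable[⨆ i, MeasurableSpace.comap (η i) inferInstance] (x k) :=
    fun k hk => (hAR.measurable k hk).mono (iSup₂_le fun i _ => le_iSup_of_le i le_rfl) le_rfl
  have hε : ∀ k, Measurable[⨆ i, MeasurableSpace.comap (ε i) inferInstance] (ε k) :=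
    fun k => Measurable.of_comap_le (le_iSup_of_le k le_rfl)
  have hε2 := fun k => integral_sq_of_map_eq_gaussianReal (hmeasε k).aemeasurable (hlawε k)
  obtain ⟨hint₁, heq₁⟩ := integral_sq_exp_half_mul hI (hx j hj) (hε j) (hAR.mgf_eq hj 1) (hε2 j).1 μ
  obtain ⟨hint₂, heq₂⟩ := integral_sq_exp_half_mul hI (hx (j + m) (by omega)) (hε (j + m))
    (hAR.mgf_eq (by omega) 1) (hε2 (j + m)).1 μ
  obtain ⟨hint₁₂, heq₁₂⟩ := integral_sq_exp_half_mul_sq_exp_half_mul hI (hx j hj)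
    (hx (j + m) (by omega)) (hε j) (hε (j + m))
    (hindep.indepFun (i := Sum.inr j) (j := Sum.inr (j + m))
      (by simp only [ne_eq, Sum.inr.injEq]; omega))
    (hAR.mgf_add hj m 1) (hε2 j).1 (hε2 (j + m)).1 μ
  simp only [hr, hh]
  rw [cov_eq_sub_of_integrable hint₁ hint₂ hint₁₂, heq₁₂, heq₁, heq₂, (hε2 j).2, (hε2 (j + m)).2,
    ← rpow_sum_of_pos hφ0]
  simp only [NNReal.coe_one, one_pow, mul_one, mul_sub, ← exp_add]
  ring_nf

/-- in the IR-SV model with returns `r j = exp(h j / 2)·ε j`, where the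
`ε j` are i.i.d. standard normal and independent of the innovation family `η`
(jointly: the combined family `Sum.elim η ε` is independent), for every `j ≥ 1` and
`m ≥ 1`, writing `ℓ = ∑_{i=j+1}^{j+m} g i`,
`Cov(r j ², r (j+m) ²) = exp(2μ + σ²/(1-φ²)) · (exp(σ² φ^ℓ/(1-φ²)) − 1)`;
in particular the squared-return process is weakly stationary. -/
theorem irsv_squared_return_autocovariance
    {Ω : Type*} [MeasurableSpace Ω] (P : Measure Ω) [IsProbabilityMeasure P]
    (μ σ φ : ℝ) (hσ : 0 < σ) (hφ0 : 0 < φ) (hφ1 : φ < 1)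
    (g : ℕ → ℝ) (hg : ∀ j, 2 ≤ j → 0 < g j)
    (η : ℕ → Ω → ℝ) (hmeasη : ∀ j, Measurable (η j))
    (ε : ℕ → Ω → ℝ) (hmeasε : ∀ j, Measurable (ε j))
    (hindep : iIndepFun (Sum.elim η ε) P)
    (hlaw1 : Measure.map (η 1) P = gaussianReal 0 (σ ^ 2 / (1 - φ ^ 2)).toNNReal)
    (hlawj : ∀ j, 2 ≤ j → Measure.map (η j) P
      = gaussianReal 0 (σ ^ 2 * (1 - φ ^ (2 * g j)) / (1 - φ ^ 2)).toNNReal)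
    (hlawε : ∀ j, Measure.map (ε j) P = gaussianReal 0 1)
    (x : ℕ → Ω → ℝ) (hx1 : x 1 = η 1)
    (hxrec : ∀ j, 2 ≤ j → x j = fun ω => φ ^ (g j) * x (j - 1) ω + η j ω)
    (h : ℕ → Ω → ℝ) (hh : ∀ j, h j = fun ω => μ + x j ω)
    (r : ℕ → Ω → ℝ) (hr : ∀ j, r j = fun ω => Real.exp (h j ω / 2) * ε j ω) :
    ∀ j, 1 ≤ j → ∀ m, 1 ≤ m →
      cov P (fun ω => (r j ω) ^ 2) (fun ω => (r (j + m) ω) ^ 2)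
        = Real.exp (2 * μ + σ ^ 2 / (1 - φ ^ 2))
          * (Real.exp (σ ^ 2 * φ ^ (∑ i ∈ Finset.Icc (j + 1) (j + m), g i)
              / (1 - φ ^ 2)) - 1) :=
  irsv_squared_return_autocovariance_general P μ σ φ hφ0 hφ1 g hg η hmeasη ε hmeasε hindep hlaw1
    hlawj hlawε x hx1 hxrec h hh r hr
end

section
/- Let μ_i, μ_k ∈ ℝ, τ_i, τ_k > 0, and ρ ∈ [−1, 1]. Let h_i ~ N(μ_i, τ_i²) and h_k ~ N(μ_k, τ_k²) be Gaussian random variables, let X and Z be standard normal, set ε_i = X and ε_k = ρX + √(1−ρ²)·Z, and assume h_i, h_k, X, Z are mutually independent. Define the returns r_i = exp(h_i/2)·ε_i and r_k = exp(h_k/2)·ε_k. Then Cov(r_i², r_k²) = 2ρ² · exp[(μ_i + μ_k) + (τ_i² + τ_k²)/2]. In particular, in the IR-MSV model with stationary log-volatility variances τ_i² = σ_i²/(1−φ_i²) and τ_k² = σ_k²/(1−φ_k²) and error correlation ρ_{ik}, the off-diagonal entry of the covariance matrix of the squared-return vector is 2ρ_{ik}² · exp[(μ_i + μ_k) + (σ_i²/(1−φ_i²)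 + σ_k²/(1−φ_k²))/2]. -/
open MeasureTheory ProbabilityTheory Real

/-!
Squaring the returns gives `rᵢ² = exp hᵢ · X²` and `rₖ² = exp hₖ · (ρX + bZ)²`, `b = √(1 - ρ²)`.
Because the log-volatilities are independent of each other and of the noise, the covariance factors as
`E[exp hᵢ] · E[exp hₖ] · Cov(X², (ρX + bZ)²)`; the lognormal means are `exp (μ + τ²/2)`, and
`Cov(X², (ρX + bZ)²) = ρ² (E X⁴ - 1) = 2ρ²` because the cross terms have a factor `E Z = 0`. The
fourth moment `E X⁴ = 3v²` of `N(0, v)` is the fourth derivative at `0` of its moment generating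
function `exp (v t² / 2)`.
-/

open scoped NNReal

lemma hasDerivAt_mul_exp_mul_sq_div_two (v : ℝ) {p : ℝ → ℝ} {p' t : ℝ}
    (hp : HasDerivAt p p' t) :
    HasDerivAt (fun t => p t * exp (v * t ^ 2 / 2))
      ((p' + v * t * p t) * exp (v * t ^ 2 / 2)) t := by
  have hq : HasDerivAt (fun t => v * t ^ 2 / 2) (v * t) t :=
    (((hasDerivAt_pow 2 t).const_mul v).div_const 2).congr_deriv (by push_cast; ring)
  exact (hp.fun_mul hq.exp).congr_deriv (by ring)

lemma deriv_mul_exp_mul_sq_div_two (v : ℝ) {p q : ℝ → ℝ} (hp : Differentiable ℝ p)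
    (hq : ∀ t, deriv p t + v * t * p t = q t) :
    deriv (fun t => p t * exp (v * t ^ 2 / 2)) = fun t => q t * exp (v * t ^ 2 / 2) :=
  funext fun t => by
    rw [← hq]
    exact (hasDerivAt_mul_exp_mul_sq_div_two v (hp t).hasDerivAt).deriv

lemma iteratedDeriv_four_exp_mul_sq_div_two_zero (v : ℝ) :
    iteratedDeriv 4 (fun t => exp (v * t ^ 2 / 2)) 0 = 3 * v ^ 2 := by
  have hderiv1 : deriv (fun t => exp (v * t ^ 2 / 2)) = fun t => v * t * exp (v * t ^ 2 / 2) := by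
    simpa using deriv_mul_exp_mul_sq_div_two v (p := fun _ => 1) (q := fun t => v * t)
      (by fun_prop) (fun t => by simp)
  have hderiv2 := deriv_mul_exp_mul_sq_div_two v (p := fun t => v * t)
    (q := fun t => v + v ^ 2 * t ^ 2) (by fun_prop)
    (fun t => by simp only [deriv_const_mul_id']; ring)
  have hderiv3 := deriv_mul_exp_mul_sq_div_two v (p := fun t => v + v ^ 2 * t ^ 2)
    (q := fun t => 3 * v ^ 2 * t + v ^ 3 * t ^ 3) (by fun_prop)
    fun t => by
      simp only [deriv_const_add', deriv_const_mul_field', deriv_pow_field]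
      push_cast
      ring
  have hderiv4 := deriv_mul_exp_mul_sq_div_two v (p := fun t => 3 * v ^ 2 * t + v ^ 3 * t ^ 3)
    (q := fun t => 3 * v ^ 2 + 6 * v ^ 3 * t ^ 2 + v ^ 4 * t ^ 4) (by fun_prop)
    fun t => by
      rw [deriv_fun_add (by fun_prop) (by fun_prop)]
      simp only [deriv_const_mul_id', deriv_const_mul_field', deriv_pow_field]
      push_cast
      ring
  simp only [iteratedDeriv_succ', iteratedDeriv_zero, hderiv1, hderiv2, hderiv3, hderiv4]
  simp

section GaussianMoments

variable {m : ℝ} {v : ℝ≥0}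

lemma integral_exp_gaussianReal : ∫ x, exp x ∂gaussianReal m v = exp (m + v / 2) := by
  simpa [mgf] using congr_fun (mgf_id_gaussianReal (μ := m) (v := v)) 1

lemma integrable_exp_gaussianReal : Integrable exp (gaussianReal m v) := by
  simpa using integrable_exp_mul_gaussianReal (μ := m) (v := v) 1

lemma integrable_pow_gaussianReal (n : ℕ) : Integrable (fun x => x ^ n) (gaussianReal m v) :=
  integrable_pow_of_mem_interior_integrableExpSet (X := id) (by simp) n

lemma integral_sq_gaussianReal_zero : ∫ x, x ^ 2 ∂gaussianReal 0 v = v := by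
  have h := variance_fun_id_gaussianReal (μ := 0) (v := v)
  rw [variance_eq_integral (by fun_prop)] at h
  simpa using h

lemma integral_pow_four_gaussianReal_zero :
    ∫ x, x ^ 4 ∂gaussianReal 0 v = 3 * (v : ℝ) ^ 2 := by
  have h := iteratedDeriv_mgf_zero (X := id) (μ := gaussianReal 0 v) (by simp) 4
  rw [mgf_id_gaussianReal] at h
  simpa [iteratedDeriv_four_exp_mul_sq_div_two_zero] using h.symm

end GaussianMoments

section RandomVariables

variable {Ω : Type*} [MeasurableSpace Ω] {P : Measure Ω} {X Z : Ω → ℝ}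
  {mX mZ : ℝ} {vX vZ : ℝ≥0}

lemma ProbabilityTheory.HasLaw.integrable_comp {𝓧 : Type*} [MeasurableSpace 𝓧] {μ : Measure 𝓧}
    {Y : Ω → 𝓧} (hY : HasLaw Y μ P) {f : 𝓧 → ℝ} (hf : Integrable f μ) :
    Integrable (fun ω => f (Y ω)) P :=
  (hY.map_eq ▸ hf).comp_aemeasurable hY.aemeasurable

lemma ProbabilityTheory.IndepFun.pow_pow (hXZ : IndepFun X Z P) (k n : ℕ) :
    IndepFun (fun ω => X ω ^ k) (fun ω => Z ω ^ n) P :=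
  hXZ.comp (measurable_id.pow_const k) (measurable_id.pow_const n)

lemma integral_pow_of_hasLaw {μ : Measure ℝ} (hX : HasLaw X μ P) (n : ℕ) :
    ∫ ω, X ω ^ n ∂P = ∫ x, x ^ n ∂μ :=
  hX.integral_comp (f := fun x => x ^ n) (by fun_prop)

lemma integral_pow_mul_pow_of_indepFun (hX : AEMeasurable X P) (hZ : AEMeasurable Z P)
    (hXZ : IndepFun X Z P) (k n : ℕ) :
    ∫ ω, X ω ^ k * Z ω ^ n ∂P = (∫ ω, X ω ^ k ∂P) * ∫ ω, Z ω ^ n ∂P :=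
  (hXZ.pow_pow k n).integral_fun_mul_eq_mul_integral (hX.pow_const k).aestronglyMeasurable
    (hZ.pow_const n).aestronglyMeasurable

lemma integral_exp_of_hasLaw_gaussianReal (hX : HasLaw X (gaussianReal mX vX) P) :
    ∫ ω, exp (X ω) ∂P = exp (mX + vX / 2) :=
  (hX.integral_comp (f := exp) (by fun_prop)).trans integral_exp_gaussianReal

lemma integrable_sq_add_of_hasLaw_gaussianReal (hX : HasLaw X (gaussianReal mX vX) P)
    (hZ : HasLaw Z (gaussianReal mZ vZ) P) (a b : ℝ) :
    Integrable (fun ω => (a * X ω + b * Z ω) ^ 2) P :=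
  ((hX.hasGaussianLaw.memLp_two.const_mul a).add
    (hZ.hasGaussianLaw.memLp_two.const_mul b)).integrable_sq

lemma integrable_pow_mul_pow_of_indepFun_gaussianReal (hX : HasLaw X (gaussianReal mX vX) P)
    (hZ : HasLaw Z (gaussianReal mZ vZ) P) (hXZ : IndepFun X Z P) (k n : ℕ) :
    Integrable (fun ω => X ω ^ k * Z ω ^ n) P :=
  (hXZ.pow_pow k n).integrable_mul (hX.integrable_comp (integrable_pow_gaussianReal k))
    (hZ.integrable_comp (integrable_pow_gaussianReal n))

lemma integrable_sq_mul_sq_add_of_indepFun_gaussianReal (hX : HasLaw X (gaussianReal mX vX) P)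
    (hZ : HasLaw Z (gaussianReal mZ vZ) P) (hXZ : IndepFun X Z P) (a b : ℝ) :
    Integrable (fun ω => X ω ^ 2 * (a * X ω + b * Z ω) ^ 2) P := by
  have h4 : Integrable (fun ω => X ω ^ 4) P := hX.integrable_comp (integrable_pow_gaussianReal 4)
  have h31 : Integrable (fun ω => X ω ^ 3 * Z ω) P := by
    simpa using integrable_pow_mul_pow_of_indepFun_gaussianReal hX hZ hXZ 3 1
  have h22 := integrable_pow_mul_pow_of_indepFun_gaussianReal hX hZ hXZ 2 2
  have hexpand : (fun ω => X ω ^ 2 * (a * X ω + b * Z ω) ^ 2)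
      = fun ω => a ^ 2 * X ω ^ 4 + 2 * a * b * (X ω ^ 3 * Z ω)
          + b ^ 2 * (X ω ^ 2 * Z ω ^ 2) := by
    funext ω; ring
  rw [hexpand]
  fun_prop

lemma integral_sq_add_of_indepFun_gaussianReal (hX : HasLaw X (gaussianReal 0 1) P)
    (hZ : HasLaw Z (gaussianReal 0 1) P) (hXZ : IndepFun X Z P) (a b : ℝ) :
    ∫ ω, (a * X ω + b * Z ω) ^ 2 ∂P = a ^ 2 + b ^ 2 := by
  have h2 : Integrable (fun ω => X ω ^ 2) P := hX.integrable_comp (integrable_pow_gaussianReal 2)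
  have h2' : Integrable (fun ω => Z ω ^ 2) P := hZ.integrable_comp (integrable_pow_gaussianReal 2)
  have h11 : Integrable (fun ω => X ω * Z ω) P := by
    simpa using integrable_pow_mul_pow_of_indepFun_gaussianReal hX hZ hXZ 1 1
  have hexpand : (fun ω => (a * X ω + b * Z ω) ^ 2)
      = fun ω => a ^ 2 * X ω ^ 2 + 2 * a * b * (X ω * Z ω) + b ^ 2 * Z ω ^ 2 := by
    funext ω; ring
  rw [hexpand]
  simp (disch := fun_prop) only [integral_add, integral_const_mul]
  rw [hXZ.integral_fun_mul_eq_mul_integral hX.aemeasurable.aestronglyMeasurable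
      hZ.aemeasurable.aestronglyMeasurable, integral_pow_of_hasLaw hX, integral_pow_of_hasLaw hZ,
    hZ.integral_eq, integral_id_gaussianReal, integral_sq_gaussianReal_zero]
  push_cast
  ring

lemma integral_sq_mul_sq_add_of_indepFun_gaussianReal (hX : HasLaw X (gaussianReal 0 1) P)
    (hZ : HasLaw Z (gaussianReal 0 1) P) (hXZ : IndepFun X Z P) (a b : ℝ) :
    ∫ ω, X ω ^ 2 * (a * X ω + b * Z ω) ^ 2 ∂P = 3 * a ^ 2 + b ^ 2 := by
  have h4 : Integrable (fun ω => X ω ^ 4) P := hX.integrable_comp (integrable_pow_gaussianReal 4)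
  have h31 : Integrable (fun ω => X ω ^ 3 * Z ω) P := by
    simpa using integrable_pow_mul_pow_of_indepFun_gaussianReal hX hZ hXZ 3 1
  have h22 := integrable_pow_mul_pow_of_indepFun_gaussianReal hX hZ hXZ 2 2
  have hexpand : (fun ω => X ω ^ 2 * (a * X ω + b * Z ω) ^ 2)
      = fun ω => a ^ 2 * X ω ^ 4 + 2 * a * b * (X ω ^ 3 * Z ω)
          + b ^ 2 * (X ω ^ 2 * Z ω ^ 2) := by
    funext ω; ring
  have h31_eq : ∫ ω, X ω ^ 3 * Z ω ∂P = (∫ ω, X ω ^ 3 ∂P) * ∫ ω, Z ω ∂P := by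
    simpa using integral_pow_mul_pow_of_indepFun hX.aemeasurable hZ.aemeasurable hXZ 3 1
  rw [hexpand]
  simp (disch := fun_prop) only [integral_add, integral_const_mul]
  rw [h31_eq, integral_pow_mul_pow_of_indepFun hX.aemeasurable hZ.aemeasurable hXZ,
    integral_pow_of_hasLaw hX 2, integral_pow_of_hasLaw hX 4, integral_pow_of_hasLaw hZ 2,
    hZ.integral_eq, integral_id_gaussianReal, integral_sq_gaussianReal_zero,
    integral_pow_four_gaussianReal_zero]
  push_cast
  ring

variable [IsProbabilityMeasure P]

lemma cov_eq_integral_mul_sub {A B : Ω → ℝ} (hA : Integrable A P) (hB : Integrable B P)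
    (hAB : Integrable (fun ω => A ω * B ω) P) :
    cov P A B = ∫ ω, A ω * B ω ∂P - (∫ ω, A ω ∂P) * ∫ ω, B ω ∂P := by
  simp only [cov, sub_mul, mul_sub]
  simp (disch := fun_prop) only [integral_sub, integral_mul_const, integral_const_mul,
    integral_const, probReal_univ, one_smul]
  ring

lemma cov_mul_mul_of_indepFun {A B S T : Ω → ℝ}
    (hABST : IndepFun (fun ω => (A ω, B ω)) (fun ω => (S ω, T ω)) P) (hAB : IndepFun A B P)
    (hA : Integrable A P) (hB : Integrable B P) (hS : Integrable S P) (hT : Integrable T P)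
    (hST : Integrable (fun ω => S ω * T ω) P) :
    cov P (fun ω => A ω * S ω) (fun ω => B ω * T ω)
      = (∫ ω, A ω ∂P) * (∫ ω, B ω ∂P) * cov P S T := by
  have hAS : IndepFun A S P := hABST.comp measurable_fst measurable_fst
  have hBT : IndepFun B T P := hABST.comp measurable_snd measurable_snd
  have hABST' : IndepFun (fun ω => A ω * B ω) (fun ω => S ω * T ω) P :=
    hABST.comp (measurable_fst.mul measurable_snd) (measurable_fst.mul measurable_snd)
  have hASi : Integrable (fun ω => A ω * S ω) P := hAS.integrable_mul hA hS
  have hBTi : Integrable (fun ω => B ω * T ω) P := hBT.integrable_mul hB hT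
  have hregroup :
      (fun ω => A ω * S ω * (B ω * T ω)) = fun ω => A ω * B ω * (S ω * T ω) := by
    funext ω; ring
  have hint : Integrable (fun ω => A ω * S ω * (B ω * T ω)) P :=
    hregroup ▸ hABST'.integrable_mul (hAB.integrable_mul hA hB) hST
  rw [cov_eq_integral_mul_sub hASi hBTi hint,
    cov_eq_integral_mul_sub hS hT hST, hregroup,
    hABST'.integral_fun_mul_eq_mul_integral
      (hA.aestronglyMeasurable.mul hB.aestronglyMeasurable) hST.aestronglyMeasurable,
    hAB.integral_fun_mul_eq_mul_integral hA.aestronglyMeasurable hB.aestronglyMeasurable,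
    hAS.integral_fun_mul_eq_mul_integral hA.aestronglyMeasurable hS.aestronglyMeasurable,
    hBT.integral_fun_mul_eq_mul_integral hB.aestronglyMeasurable hT.aestronglyMeasurable]
  ring

lemma cov_sq_sq_add_of_indepFun_gaussianReal (hX : HasLaw X (gaussianReal 0 1) P)
    (hZ : HasLaw Z (gaussianReal 0 1) P) (hXZ : IndepFun X Z P) (a b : ℝ) :
    cov P (fun ω => X ω ^ 2) (fun ω => (a * X ω + b * Z ω) ^ 2) = 2 * a ^ 2 := by
  rw [cov_eq_integral_mul_sub (hX.integrable_comp (integrable_pow_gaussianReal 2))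
      (integrable_sq_add_of_hasLaw_gaussianReal hX hZ a b)
      (integrable_sq_mul_sq_add_of_indepFun_gaussianReal hX hZ hXZ a b),
    integral_sq_mul_sq_add_of_indepFun_gaussianReal hX hZ hXZ,
    integral_sq_add_of_indepFun_gaussianReal hX hZ hXZ, integral_pow_of_hasLaw hX,
    integral_sq_gaussianReal_zero]
  push_cast
  ring

lemma cov_sq_exp_half_mul_of_indepFun_gaussianReal {U V : Ω → ℝ} {mU mV : ℝ} {vU vV : ℝ≥0}
    (hU : HasLaw U (gaussianReal mU vU) P) (hV : HasLaw V (gaussianReal mV vV) P)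
    (hX : HasLaw X (gaussianReal 0 1) P) (hZ : HasLaw Z (gaussianReal 0 1) P)
    (hUV : IndepFun U V P) (hXZ : IndepFun X Z P)
    (hUV_XZ : IndepFun (fun ω => (U ω, V ω)) (fun ω => (X ω, Z ω)) P) (a b : ℝ) :
    cov P (fun ω => (exp (U ω / 2) * X ω) ^ 2)
        (fun ω => (exp (V ω / 2) * (a * X ω + b * Z ω)) ^ 2)
      = 2 * a ^ 2 * exp ((mU + mV) + (vU + vV) / 2) := by
  have hsq (u x : ℝ) : (exp (u / 2) * x) ^ 2 = exp u * x ^ 2 := by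
    rw [mul_pow, ← exp_nat_mul]
    ring_nf
  have hindep : IndepFun (fun ω => (exp (U ω), exp (V ω)))
      (fun ω => (X ω ^ 2, (a * X ω + b * Z ω) ^ 2)) P :=
    hUV_XZ.comp (show Measurable fun p : ℝ × ℝ => (exp p.1, exp p.2) by fun_prop)
      (show Measurable fun p : ℝ × ℝ => (p.1 ^ 2, (a * p.1 + b * p.2) ^ 2) by fun_prop)
  simp only [hsq]
  rw [cov_mul_mul_of_indepFun hindep (hUV.comp measurable_exp measurable_exp)
      (hU.integrable_comp integrable_exp_gaussianReal)
      (hV.integrable_comp integrable_exp_gaussianReal)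
      (hX.integrable_comp (integrable_pow_gaussianReal 2))
      (integrable_sq_add_of_hasLaw_gaussianReal hX hZ a b)
      (integrable_sq_mul_sq_add_of_indepFun_gaussianReal hX hZ hXZ a b),
    cov_sq_sq_add_of_indepFun_gaussianReal hX hZ hXZ, integral_exp_of_hasLaw_gaussianReal hU,
    integral_exp_of_hasLaw_gaussianReal hV, ← exp_add]
  ring_nf

end RandomVariables

theorem irmsv_squared_return_cross_covariance_general
    {Ω : Type*} [MeasurableSpace Ω] (P : Measure Ω) [IsProbabilityMeasure P]
    (μi μk τi τk : ℝ)
    (ρ : ℝ)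
    (hi hk X Z : Ω → ℝ)
    (hmhi : Measurable hi) (hmhk : Measurable hk) (hmX : Measurable X) (hmZ : Measurable Z)
    (hindep : iIndepFun ![hi, hk, X, Z] P)
    (hhilaw : Measure.map hi P = gaussianReal μi (τi ^ 2).toNNReal)
    (hhklaw : Measure.map hk P = gaussianReal μk (τk ^ 2).toNNReal)
    (hXlaw : Measure.map X P = gaussianReal 0 1)
    (hZlaw : Measure.map Z P = gaussianReal 0 1)
    (εi εk : Ω → ℝ) (hεi : εi = X) (hεk : εk = fun ω => ρ * X ω + Real.sqrt (1 - ρ ^ 2) * Z ω)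
    (ri rk : Ω → ℝ)
    (hri : ri = fun ω => Real.exp (hi ω / 2) * εi ω)
    (hrk : rk = fun ω => Real.exp (hk ω / 2) * εk ω) :
    cov P (fun ω => (ri ω) ^ 2) (fun ω => (rk ω) ^ 2)
      = 2 * ρ ^ 2 * Real.exp ((μi + μk) + (τi ^ 2 + τk ^ 2) / 2)
    ∧ ∀ σi σk φi φk : ℝ, 0 < σi → 0 < σk → 0 < φi → φi < 1 → 0 < φk → φk < 1 →
        τi ^ 2 = σi ^ 2 / (1 - φi ^ 2) → τk ^ 2 = σk ^ 2 / (1 - φk ^ 2) →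
        cov P (fun ω => (ri ω) ^ 2) (fun ω => (rk ω) ^ 2)
          = 2 * ρ ^ 2 * Real.exp ((μi + μk)
              + (σi ^ 2 / (1 - φi ^ 2) + σk ^ 2 / (1 - φk ^ 2)) / 2) := by
  subst εi εk ri rk
  have hmeas : ∀ j, Measurable (![hi, hk, X, Z] j) := by
    intro j
    fin_cases j <;> assumption
  have hcov := cov_sq_exp_half_mul_of_indepFun_gaussianReal ⟨hmhi.aemeasurable, hhilaw⟩
    ⟨hmhk.aemeasurable, hhklaw⟩ ⟨hmX.aemeasurable, hXlaw⟩ ⟨hmZ.aemeasurable, hZlaw⟩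
    (hindep.indepFun (show (0 : Fin 4) ≠ 1 by decide))
    (hindep.indepFun (show (2 : Fin 4) ≠ 3 by decide))
    (hindep.indepFun_prodMk_prodMk hmeas 0 1 2 3 (by decide) (by decide) (by decide) (by decide))
    ρ (Real.sqrt (1 - ρ ^ 2))
  rw [Real.coe_toNNReal _ (sq_nonneg τi), Real.coe_toNNReal _ (sq_nonneg τk)] at hcov
  refine ⟨hcov, fun σi σk φi φk _ _ _ _ _ _ hτi hτk => ?_⟩
  rw [hcov, hτi, hτk]

/-- in the constant-correlation IR-MSV model, with `hi ~ N(μi, τi²)`,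
`hk ~ N(μk, τk²)`, `X, Z` standard normal, `hi, hk, X, Z` mutually independent,
`εi = X`, `εk = ρX + √(1-ρ²)·Z`, and returns `ri = exp(hi/2)·εi`, `rk = exp(hk/2)·εk`,
one has `Cov(ri², rk²) = 2ρ²·exp((μi + μk) + (τi² + τk²)/2)`; in particular with
`τi² = σi²/(1-φi²)` and `τk² = σk²/(1-φk²)` the off-diagonal entry of the covariance
matrix of the squared-return vector is
`2ρ²·exp((μi + μk) + (σi²/(1-φi²) + σk²/(1-φk²))/2)`. -/
theorem irmsv_squared_return_cross_covariance
    {Ω : Type*} [MeasurableSpace Ω] (P : Measure Ω) [IsProbabilityMeasure P]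
    (μi μk τi τk : ℝ) (hτi : 0 < τi) (hτk : 0 < τk)
    (ρ : ℝ) (hρ : ρ ∈ Set.Icc (-1 : ℝ) 1)
    (hi hk X Z : Ω → ℝ)
    (hmhi : Measurable hi) (hmhk : Measurable hk) (hmX : Measurable X) (hmZ : Measurable Z)
    (hindep : iIndepFun ![hi, hk, X, Z] P)
    (hhilaw : Measure.map hi P = gaussianReal μi (τi ^ 2).toNNReal)
    (hhklaw : Measure.map hk P = gaussianReal μk (τk ^ 2).toNNReal)
    (hXlaw : Measure.map X P = gaussianReal 0 1)
    (hZlaw : Measure.map Z P = gaussianReal 0 1)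
    (εi εk : Ω → ℝ) (hεi : εi = X) (hεk : εk = fun ω => ρ * X ω + Real.sqrt (1 - ρ ^ 2) * Z ω)
    (ri rk : Ω → ℝ)
    (hri : ri = fun ω => Real.exp (hi ω / 2) * εi ω)
    (hrk : rk = fun ω => Real.exp (hk ω / 2) * εk ω) :
    cov P (fun ω => (ri ω) ^ 2) (fun ω => (rk ω) ^ 2)
      = 2 * ρ ^ 2 * Real.exp ((μi + μk) + (τi ^ 2 + τk ^ 2) / 2)
    ∧ ∀ σi σk φi φk : ℝ, 0 < σi → 0 < σk → 0 < φi → φi < 1 → 0 < φk → φk < 1 →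
        τi ^ 2 = σi ^ 2 / (1 - φi ^ 2) → τk ^ 2 = σk ^ 2 / (1 - φk ^ 2) →
        cov P (fun ω => (ri ω) ^ 2) (fun ω => (rk ω) ^ 2)
          = 2 * ρ ^ 2 * Real.exp ((μi + μk)
              + (σi ^ 2 / (1 - φi ^ 2) + σk ^ 2 / (1 - φk ^ 2)) / 2) :=
  irmsv_squared_return_cross_covariance_general P μi μk τi τk ρ hi hk X Z hmhi hmhk hmX hmZ hindep
    hhilaw hhklaw hXlaw hZlaw εi εk hεi hεk ri rk hri hrk
end
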